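/- arXiv:2503.06609 — 2 statements merged into one kernel-verified Lean document; each statement's English description precedes it below -/
import Mathlib

section
/- For every integer M ≥ 1, the central finite-difference coefficients satisfy the consistency identity Σ_{j=1}^{M} 2·(−1)^{j+1} · (M!)² / ((M − j)! · (M + j)!) = 1; equivalently, Σ_{j=1}^{M} r_j · j² = 1 where r_j = 2·(−1)^{j+1}·(M!)² / (j²·(M − j)!·(M + j)!). -/
open Finset

/-- Partial alternating sum of binomial coefficients. -/
lemma altA (n : ℕ) (hn : 1 ≤ n) (k : ℕ) :
    ∑ i ∈ Finset.range (k+1), (-1:ℤ)^i * (n.choose i) = (-1)^k * ((n-1).choose k) := by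
  obtain ⟨m, rfl⟩ := Nat.exists_eq_add_of_le hn
  induction k with
  | zero => simp
  | succ k ih =>
    rw [Finset.sum_range_succ, ih]
    have h : (1 + m).choose (k+1) = m.choose k + m.choose (k+1) := by
      rw [Nat.add_comm 1 m]; exact Nat.choose_succ_succ m k
    have h1 : (1 + m - 1) = m := by omega
    rw [h, h1]
    push_cast
    ring

lemma altB (M : ℕ) (hM : 1 ≤ M) :
    ∑ j ∈ Finset.Icc 1 M, (-1:ℤ)^(j+1) * ((2*M).choose (M+j)) =
      ((2*M-1).choose (M-1)) := by
  have h2M : 1 ≤ 2*M := by omega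
  have hIcc : Finset.Icc 1 M = Finset.Ico 1 (M+1) := by
    rw [Finset.Ico_add_one_right_eq_Icc]
  rw [hIcc, Finset.sum_Ico_eq_sum_range]
  simp only [Nat.add_sub_cancel]
  have hT : ∑ i ∈ Finset.range M, (-1:ℤ)^(1+i+1) * ((2*M).choose (M+(1+i)))
      = ∑ i ∈ Finset.range M, (-1:ℤ)^(M-1-i) * ((2*M).choose i) := by
    rw [← Finset.sum_range_reflect
      (fun i => (-1:ℤ)^(M-1-i) * ((2*M).choose i)) M]
    apply Finset.sum_congr rfl
    intro i hi
    have hi' : i < M := Finset.mem_range.mp hi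
    have e1 : M - 1 - (M - 1 - i) = i := by omega
    rw [e1]
    have e2 : (2*M).choose (M + (1+i)) = (2*M).choose (M - 1 - i) := by
      have : M - 1 - i = 2*M - (M + (1+i)) := by omega
      rw [this, Nat.choose_symm (by omega)]
    rw [e2]
    have e3 : (-1:ℤ)^(1+i+1) = (-1)^i := by
      rw [show 1+i+1 = i+2 by omega, pow_add]; ring
    rw [e3]
  rw [hT]
  have hS : ∑ i ∈ Finset.range M, (-1:ℤ)^(M-1-i) * ((2*M).choose i)
      = (-1:ℤ)^(M-1) * ∑ i ∈ Finset.range M, (-1:ℤ)^i * ((2*M).choose i) := by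
    rw [Finset.mul_sum]
    apply Finset.sum_congr rfl
    intro i hi
    have hi' : i < M := Finset.mem_range.mp hi
    have h4 : (-1:ℤ)^(M-1) = (-1)^(M-1-i) * (-1)^i := by
      rw [← pow_add]; congr 1; omega
    have h5 : (-1:ℤ)^(M-1-i) = (-1)^(M-1) * (-1)^i := by
      rw [h4, mul_assoc, ← pow_add, ← two_mul, pow_mul]; norm_num
    rw [h5]; ring
  rw [hS]
  have := altA (2*M) h2M (M-1)
  rw [show M - 1 + 1 = M by omega] at this
  rw [this, ← mul_assoc, ← pow_add, ← two_mul, pow_mul]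
  simp

/-- **Consistency identity for central finite-difference coefficients.**
For every `M ≥ 1`:
`Σ_{j=1}^{M} 2·(−1)^{j+1}·(M!)²/((M−j)!·(M+j)!) = 1`, equivalently
`Σ_{j=1}^{M} r_j·j² = 1` with `r_j = 2·(−1)^{j+1}·(M!)²/(j²·(M−j)!·(M+j)!)`. -/
theorem central_difference_second_moment
    (M : ℕ) (hM : 1 ≤ M) :
    (∑ j ∈ Finset.Icc 1 M,
      2 * (-1 : ℝ) ^ (j + 1) * (M.factorial : ℝ) ^ 2 /
        ((M - j).factorial * (M + j).factorial) = 1) ∧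
    (∑ j ∈ Finset.Icc 1 M,
      (2 * (-1 : ℝ) ^ (j + 1) * (M.factorial : ℝ) ^ 2 /
        ((j : ℝ) ^ 2 * (M - j).factorial * (M + j).factorial)) * (j : ℝ) ^ 2 = 1) := by
  have hfac2M : ((2*M).factorial : ℝ) ≠ 0 := Nat.cast_ne_zero.mpr (Nat.factorial_ne_zero _)
  have hcent : (2*M).choose M * M.factorial * M.factorial = (2*M).factorial := by
    have := Nat.choose_mul_factorial_mul_factorial (show M ≤ 2*M by omega)
    rwa [show 2*M - M = M by omega] at this
  have hdouble : 2 * ((2*M-1).choose (M-1)) = (2*M).choose M := by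
    have h1 : (2*M).choose M = (2*M-1).choose (M-1) + (2*M-1).choose M := by
      have h := Nat.choose_succ_succ (2*M-1) (M-1)
      simp only [Nat.succ_eq_add_one] at h
      rw [show 2*M-1+1 = 2*M by omega, show M-1+1 = M by omega] at h
      exact h
    have h2 : (2*M-1).choose M = (2*M-1).choose (M-1) := by
      rw [show M - 1 = 2*M - 1 - M by omega]
      exact (Nat.choose_symm (by omega)).symm
    omega
  have key : ∀ j ∈ Finset.Icc 1 M,
      2 * (-1 : ℝ) ^ (j + 1) * (M.factorial : ℝ) ^ 2 /
        ((M - j).factorial * (M + j).factorial)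
      = ((-1:ℝ)^(j+1) * ((2*M).choose (M+j) : ℝ)) *
          (2 * (M.factorial : ℝ)^2 / ((2*M).factorial)) := by
    intro j hj
    obtain ⟨hj1, hj2⟩ := Finset.mem_Icc.mp hj
    have hle : M + j ≤ 2*M := by omega
    have hfac : (2*M).choose (M+j) * (M+j).factorial * (M-j).factorial
        = (2*M).factorial := by
      have := Nat.choose_mul_factorial_mul_factorial hle
      rwa [show 2*M - (M+j) = M - j by omega] at this
    have hA : ((M - j).factorial : ℝ) ≠ 0 := Nat.cast_ne_zero.mpr (Nat.factorial_ne_zero _)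
    have hB : ((M + j).factorial : ℝ) ≠ 0 := Nat.cast_ne_zero.mpr (Nat.factorial_ne_zero _)
    have hR : ((2*M).choose (M+j) : ℝ) * (M+j).factorial * (M-j).factorial
        = (2*M).factorial := by exact_mod_cast hfac
    field_simp
    linear_combination (-1:ℝ) * hR
  have hBR : (∑ j ∈ Finset.Icc 1 M, (-1:ℝ)^(j+1) * ((2*M).choose (M+j) : ℝ))
      = (((2*M-1).choose (M-1) : ℕ) : ℝ) := by exact_mod_cast altB M hM
  have first : ∑ j ∈ Finset.Icc 1 M,
      2 * (-1 : ℝ) ^ (j + 1) * (M.factorial : ℝ) ^ 2 /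
        ((M - j).factorial * (M + j).factorial) = 1 := by
    rw [Finset.sum_congr rfl key, ← Finset.sum_mul, hBR]
    have hRc : (((2*M).choose M : ℝ)) * (M.factorial:ℝ) * M.factorial = (2*M).factorial := by
      exact_mod_cast hcent
    have hRd : (2:ℝ) * ((2*M-1).choose (M-1) : ℕ) = ((2*M).choose M : ℕ) := by
      exact_mod_cast hdouble
    field_simp
    linear_combination (M.factorial:ℝ)^2 * hRd + hRc
  refine ⟨first, ?_⟩
  have second_eq : ∑ j ∈ Finset.Icc 1 M,
      (2 * (-1 : ℝ) ^ (j + 1) * (M.factorial : ℝ) ^ 2 /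
        ((j : ℝ) ^ 2 * (M - j).factorial * (M + j).factorial)) * (j : ℝ) ^ 2
      = ∑ j ∈ Finset.Icc 1 M,
      2 * (-1 : ℝ) ^ (j + 1) * (M.factorial : ℝ) ^ 2 /
        ((M - j).factorial * (M + j).factorial) := by
    apply Finset.sum_congr rfl
    intro j hj
    obtain ⟨hj1, hj2⟩ := Finset.mem_Icc.mp hj
    have hj0 : (j:ℝ) ≠ 0 := by
      exact Nat.cast_ne_zero.mpr (by omega : j ≠ 0)
    have hA : ((M - j).factorial : ℝ) ≠ 0 := Nat.cast_ne_zero.mpr (Nat.factorial_ne_zero _)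
    have hB : ((M + j).factorial : ℝ) ≠ 0 := Nat.cast_ne_zero.mpr (Nat.factorial_ne_zero _)
    field_simp
  rw [second_eq]; exact first
end

section
/- For all integers M ≥ 2 and all integers l with 2 ≤ l ≤ M, the higher even moments of the central finite-difference coefficients vanish: Σ_{j=1}^{M} (−1)^{j+1} · j^{2l−2} · (M!)² / ((M − j)! · (M + j)!) = 0; equivalently, Σ_{j=−M}^{M} r_j · j^{2l} = 0 where r_j = 2·(−1)^{j+1}·(M!)² / (j²·(M − j)!·(M + j)!) for 1 ≤ j ≤ M and r_{−j} = r_j. -/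
open Polynomial Finset in
lemma diff_annihilates : ∀ (n : ℕ) (P : Polynomial ℝ), P.degree < n →
    ∑ j ∈ Finset.range (n+1), (-1:ℝ)^j * (n.choose j) * P.eval (j:ℝ) = 0 := by
  intro n
  induction n with
  | zero =>
    intro P hP
    have : P = 0 := by
      rw [← Polynomial.degree_eq_bot]
      exact Nat.WithBot.lt_zero_iff.mp (by simpa using hP)
    simp [this]
  | succ n ih =>
    intro P hP
    by_cases hP0 : P = 0
    · simp [hP0]
    set Q : Polynomial ℝ := P.comp (X + 1) - P with hQ
    have hX1nd : (X + 1 : Polynomial ℝ).natDegree = 1 := by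
      simpa using Polynomial.natDegree_X_add_C (1:ℝ)
    have hlead : (P.comp (X + 1)).leadingCoeff = P.leadingCoeff := by
      rw [Polynomial.leadingCoeff_comp (by rw [hX1nd]; exact one_ne_zero)]
      have : (X + 1 : Polynomial ℝ).leadingCoeff = 1 := by
        simpa using Polynomial.leadingCoeff_X_add_C (1:ℝ)
      simp [this]
    have hcompne : P.comp (X + 1) ≠ 0 := by
      rw [← Polynomial.leadingCoeff_ne_zero, hlead, Polynomial.leadingCoeff_ne_zero]
      exact hP0
    have hdeg_comp : (P.comp (X + 1)).degree = P.degree := by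
      rw [Polynomial.degree_eq_natDegree hcompne, Polynomial.degree_eq_natDegree hP0,
        Polynomial.natDegree_comp, hX1nd, mul_one]
    have hQdegP : Q.degree < P.degree := by
      have := Polynomial.degree_sub_lt hdeg_comp hcompne hlead
      rwa [hdeg_comp] at this
    have hQdeg : Q.degree < n := by
      have hd := Polynomial.degree_eq_natDegree hP0
      have h1 : P.natDegree < n + 1 := by
        rw [hd] at hP; exact_mod_cast hP
      calc Q.degree < (P.natDegree : WithBot ℕ) := hd ▸ hQdegP
        _ ≤ (n : WithBot ℕ) := by exact_mod_cast Nat.lt_succ_iff.mp h1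
    have hQeval : ∀ j : ℕ, Q.eval (j:ℝ) = P.eval ((j:ℝ)+1) - P.eval (j:ℝ) := by
      intro j; simp [hQ, Polynomial.eval_comp]
    have hQsum := ih Q hQdeg
    have hQsum' : ∑ j ∈ Finset.range (n+1),
        (-1:ℝ)^j * (n.choose j) * (P.eval ((j:ℝ)+1) - P.eval (j:ℝ)) = 0 := by
      rw [← hQsum]; exact Finset.sum_congr rfl fun j _ => by rw [hQeval]
    have shift : ∑ j ∈ Finset.range (n+1), (-1:ℝ)^(j+1) * (n.choose (j+1)) * P.eval ((j:ℝ)+1)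
        = ∑ j ∈ Finset.range (n+1), (-1:ℝ)^j * (n.choose j) * P.eval (j:ℝ) - P.eval 0 := by
      rw [Finset.sum_range_succ, Finset.sum_range_succ']
      push_cast
      simp [Nat.choose_succ_self]
    have main : ∑ j ∈ Finset.range (n+1+1), (-1:ℝ)^j * ((n+1).choose j) * P.eval (j:ℝ)
        = -∑ j ∈ Finset.range (n+1), (-1:ℝ)^j * (n.choose j) * (P.eval ((j:ℝ)+1) - P.eval (j:ℝ)) := by
      rw [Finset.sum_range_succ']
      have expand : ∀ j ∈ Finset.range (n+1),
          (-1:ℝ)^(j+1) * (((n+1).choose (j+1) : ℕ):ℝ) * P.eval (((j+1:ℕ)):ℝ)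
          = -((-1:ℝ)^j * (n.choose j) * P.eval ((j:ℝ)+1))
            + (-1:ℝ)^(j+1) * (n.choose (j+1)) * P.eval ((j:ℝ)+1) := by
        intro j _
        rw [Nat.choose_succ_succ]
        push_cast
        ring
      rw [Finset.sum_congr rfl expand, Finset.sum_add_distrib, shift]
      rw [← Finset.sum_neg_distrib]
      push_cast
      have expand2 : ∀ j ∈ Finset.range (n+1),
          -((-1:ℝ)^j * (n.choose j) * (P.eval ((j:ℝ)+1) - P.eval (j:ℝ)))
          = -((-1:ℝ)^j * (n.choose j) * P.eval ((j:ℝ)+1)) + (-1:ℝ)^j * (n.choose j) * P.eval (j:ℝ) := by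
        intro j _; ring
      rw [Finset.sum_congr rfl expand2, Finset.sum_add_distrib]
      simp
      ring
    rw [main, hQsum', neg_zero]


open Polynomial Finset in
lemma choose_moment_vanish (M l : ℕ) (hM : 2 ≤ M) (hl2 : 2 ≤ l) (hlM : l ≤ M) :
    ∑ k ∈ Finset.Icc 1 M, (-1:ℝ)^(k+1) * (((2*M).choose (M+k)):ℝ) * (k:ℝ)^(2*l-2) = 0 := by
  set E := 2*l - 2 with hE
  have hEpos : 0 < E := by omega
  have hEeven : Even E := by
    refine ⟨l - 1, by omega⟩
  set P : Polynomial ℝ := (X - C (M:ℝ))^E with hP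
  have hdegP : P.degree < (2*M : ℕ) := by
    rw [hP, Polynomial.degree_pow, Polynomial.degree_X_sub_C]
    simp only [nsmul_eq_mul, mul_one]
    exact_mod_cast (by omega : E < 2*M)
  have hS := diff_annihilates (2*M) P hdegP
  set g : ℕ → ℝ := fun j => (-1:ℝ)^j * (((2*M).choose j):ℝ) * ((j:ℝ) - M)^E with hgdef
  have hg : ∑ j ∈ Finset.range (2*M+1), g j = 0 := by
    rw [← hS]
    exact Finset.sum_congr rfl fun j _ => by simp [hgdef, hP]
  set u : ℕ → ℝ := fun k => (-1:ℝ)^(k+1) * (((2*M).choose (M+k)):ℝ) * (k:ℝ)^E with hudef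
  -- split the range
  have hsplit : ∑ j ∈ Finset.range (2*M+1), g j
      = ∑ j ∈ Finset.range (M+1), g j + ∑ j ∈ Finset.Ico (M+1) (2*M+1), g j := by
    rw [Finset.range_eq_Ico, ← Finset.sum_Ico_consecutive _ (by omega : 0 ≤ M+1) (by omega : M+1 ≤ 2*M+1), Finset.range_eq_Ico]
  have hright : ∑ j ∈ Finset.Ico (M+1) (2*M+1), g j = ∑ i ∈ Finset.range M, g (M+1+i) := by
    rw [Finset.sum_Ico_eq_sum_range, show 2*M+1-(M+1) = M from by omega]
  have hleft : ∑ j ∈ Finset.range (M+1), g j = ∑ i ∈ Finset.range M, g (M - (1+i)) + g M := by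
    rw [← Finset.sum_range_reflect, Finset.sum_range_succ']
    congr 1
    exact Finset.sum_congr rfl fun i _ => by congr 1; omega
  have hgM : g M = 0 := by
    simp [hgdef, zero_pow (by omega : E ≠ 0)]
  have hU : ∑ k ∈ Finset.Icc 1 M, u k = ∑ i ∈ Finset.range M, u (1+i) := by
    rw [← Finset.Ico_add_one_right_eq_Icc, Finset.sum_Ico_eq_sum_range, show M+1-1 = M from by omega]
  have hpt1 : ∀ i ∈ Finset.range M, g (M+1+i) = (-1:ℝ)^(M+1) * u (1+i) := by
    intro i _
    simp only [hgdef, hudef]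
    rw [show M + (1+i) = M+1+i by omega]
    push_cast
    ring_nf
  have hpt2 : ∀ i ∈ Finset.range M, g (M - (1+i)) = (-1:ℝ)^(M+1) * u (1+i) := by
    intro i hi
    have hiM : 1 + i ≤ M := by
      simp only [Finset.mem_range] at hi; omega
    simp only [hgdef, hudef]
    have hcast : ((M - (1+i) : ℕ) : ℝ) = (M:ℝ) - (1+i) := by
      push_cast [hiM]; ring
    have hchoose : (2*M).choose (M - (1+i)) = (2*M).choose (M + (1+i)) := by
      rw [show M - (1+i) = 2*M - (M + (1+i)) by omega]
      exact Nat.choose_symm (by omega)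
    have hsign : (-1:ℝ)^(M-(1+i)) = (-1:ℝ)^M * (-1:ℝ)^(1+i) := by
      have hM' : M - (1+i) + (1+i) = M := by omega
      have h2 : ((-1:ℝ)^(1+i))^2 = 1 := by
        rw [← pow_mul, mul_comm, pow_mul]; simp
      calc (-1:ℝ)^(M-(1+i)) = (-1:ℝ)^(M-(1+i)) * ((-1:ℝ)^(1+i))^2 := by rw [h2, mul_one]
        _ = (-1:ℝ)^M * (-1:ℝ)^(1+i) := by rw [sq, ← mul_assoc, ← pow_add, hM']
    rw [hcast, hchoose, hsign]
    have hnegpow : ((M:ℝ) - (1+(i:ℝ)) - M)^E = ((1:ℝ)+(i:ℝ))^E := by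
      rw [show ((M:ℝ) - (1+(i:ℝ)) - (M:ℝ)) = -((1:ℝ)+(i:ℝ)) by ring, hEeven.neg_pow]
    rw [hnegpow]
    push_cast [pow_add, pow_succ]
    ring
  -- assemble
  rw [hU]
  have hg2 : (-1:ℝ)^(M+1) * (∑ i ∈ Finset.range M, u (1+i))
      + (-1:ℝ)^(M+1) * (∑ i ∈ Finset.range M, u (1+i)) = 0 := by
    rw [hsplit, hleft, hright, hgM] at hg
    rw [Finset.sum_congr rfl hpt2, Finset.sum_congr rfl hpt1] at hg
    rw [← Finset.mul_sum _ _ ((-1:ℝ)^(M+1))] at hg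
    linarith
  have h3 : ((-1:ℝ)^(M+1)) * ∑ i ∈ Finset.range M, u (1+i) = 0 := by linarith
  rcases mul_eq_zero.mp h3 with h | h
  · exact absurd h (by positivity)
  · exact h


/-- **Vanishing of higher even moments of central finite-difference coefficients.**
For `M ≥ 2` and `2 ≤ l ≤ M`:
`Σ_{j=1}^{M} (−1)^{j+1}·j^{2l−2}·(M!)²/((M−j)!·(M+j)!) = 0`; equivalently,
`Σ_{j=−M}^{M} r_j·j^{2l} = 0` where `r_j = 2·(−1)^{j+1}·(M!)²/(j²·(M−j)!·(M+j)!)`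
for `1 ≤ j ≤ M` and `r_{−j} = r_j`. -/
theorem central_difference_higher_even_moments_vanish
    (M : ℕ) (hM : 2 ≤ M) (l : ℕ) (hl2 : 2 ≤ l) (hlM : l ≤ M)
    (r : ℤ → ℝ)
    (hr : ∀ j : ℕ, 1 ≤ j → j ≤ M →
      r j = 2 * (-1 : ℝ) ^ (j + 1) * (M.factorial : ℝ) ^ 2 /
        ((j : ℝ) ^ 2 * (M - j).factorial * (M + j).factorial))
    (hrneg : ∀ j : ℤ, r (-j) = r j) :
    (∑ j ∈ Finset.Icc 1 M,
      (-1 : ℝ) ^ (j + 1) * (j : ℝ) ^ (2 * l - 2) * (M.factorial : ℝ) ^ 2 /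
        ((M - j).factorial * (M + j).factorial) = 0) ∧
    (∑ j ∈ Finset.Icc (-(M : ℤ)) (M : ℤ), r j * (j : ℝ) ^ (2 * l) = 0) := by

  have hU := choose_moment_vanish M l hM hl2 hlM
  have hT : ∑ j ∈ Finset.Icc 1 M,
      (-1 : ℝ) ^ (j + 1) * (j : ℝ) ^ (2 * l - 2) * (M.factorial : ℝ) ^ 2 /
        ((M - j).factorial * (M + j).factorial) = 0 := by
    have hcongr : ∀ j ∈ Finset.Icc 1 M,
        (-1 : ℝ) ^ (j + 1) * (j : ℝ) ^ (2 * l - 2) * (M.factorial : ℝ) ^ 2 /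
          ((M - j).factorial * (M + j).factorial)
        = ((M.factorial : ℝ)^2 / ((2*M).factorial : ℝ))
          * ((-1:ℝ)^(j+1) * (((2*M).choose (M+j)):ℝ) * (j:ℝ)^(2*l-2)) := by
      intro j hj
      simp only [Finset.mem_Icc] at hj
      have hfact : ((2*M).factorial : ℝ)
          = (((2*M).choose (M+j)):ℝ) * ((M+j).factorial : ℝ) * ((M-j).factorial : ℝ) := by
        rw [show M - j = 2*M - (M+j) from by omega]
        exact_mod_cast (Nat.choose_mul_factorial_mul_factorial (show M+j ≤ 2*M by omega)).symm
      have h1 : ((M-j).factorial : ℝ) ≠ 0 := Nat.cast_ne_zero.mpr (Nat.factorial_ne_zero _)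
      have h2 : ((M+j).factorial : ℝ) ≠ 0 := Nat.cast_ne_zero.mpr (Nat.factorial_ne_zero _)
      have h3 : ((2*M).factorial : ℝ) ≠ 0 := Nat.cast_ne_zero.mpr (Nat.factorial_ne_zero _)
      field_simp
      linear_combination ((j:ℝ)^(2*l-2)) * hfact
    rw [Finset.sum_congr rfl hcongr, ← Finset.mul_sum, hU, mul_zero]
  refine ⟨hT, ?_⟩
  have hIccimage : Finset.Icc (1:ℤ) (M:ℤ) = (Finset.Icc 1 M).image (fun n : ℕ => (n:ℤ)) := by
    ext x
    simp only [Finset.mem_Icc, Finset.mem_image]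
    constructor
    · rintro ⟨h1x, h2x⟩
      exact ⟨x.toNat, ⟨by omega, by omega⟩, by omega⟩
    · rintro ⟨n, hn, rfl⟩
      omega
  have hterm : ∀ j ∈ Finset.Icc 1 M, r (j:ℕ) * (((j:ℕ):ℤ):ℝ)^(2*l)
      = 2 * ((-1 : ℝ) ^ (j + 1) * (j : ℝ) ^ (2 * l - 2) * (M.factorial : ℝ) ^ 2 /
        ((M - j).factorial * (M + j).factorial)) := by
    intro j hj
    simp only [Finset.mem_Icc] at hj
    rw [hr j hj.1 hj.2]
    have hjne : (j:ℝ) ≠ 0 := Nat.cast_ne_zero.mpr (by omega)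
    have h1 : ((M-j).factorial : ℝ) ≠ 0 := Nat.cast_ne_zero.mpr (Nat.factorial_ne_zero _)
    have h2 : ((M+j).factorial : ℝ) ≠ 0 := Nat.cast_ne_zero.mpr (Nat.factorial_ne_zero _)
    have hpow : (((j:ℕ):ℤ):ℝ)^(2*l) = (j:ℝ)^(2*l-2) * (j:ℝ)^2 := by
      rw [show (((j:ℕ):ℤ):ℝ) = (j:ℝ) by push_cast; ring, ← pow_add]
      congr 1
      omega
    rw [hpow]
    field_simp
  have hz : ∑ j ∈ Finset.Icc (1:ℤ) (M:ℤ), r j * (j:ℝ)^(2*l) = 0 := by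
    rw [hIccimage, Finset.sum_image (by intro a _ b _ h; exact Nat.cast_injective h)]
    rw [Finset.sum_congr rfl hterm, ← Finset.mul_sum, hT, mul_zero]
  have hset : Finset.Icc (-(M:ℤ)) (M:ℤ)
      = (Finset.Icc (-(M:ℤ)) (-1)) ∪ (insert 0 (Finset.Icc (1:ℤ) (M:ℤ))) := by
    ext x
    simp only [Finset.mem_Icc, Finset.mem_union, Finset.mem_insert]
    omega
  have hdisj : Disjoint (Finset.Icc (-(M:ℤ)) (-1)) (insert 0 (Finset.Icc (1:ℤ) (M:ℤ))) := by
    rw [Finset.disjoint_left]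
    intro a ha hb
    simp only [Finset.mem_Icc, Finset.mem_insert] at ha hb
    omega
  have hneg : Finset.Icc (-(M:ℤ)) (-1) = (Finset.Icc (1:ℤ) (M:ℤ)).image (fun x => -x) := by
    ext x
    simp only [Finset.mem_Icc, Finset.mem_image]
    constructor
    · rintro ⟨h1x, h2x⟩
      exact ⟨-x, ⟨by omega, by omega⟩, by omega⟩
    · rintro ⟨n, hn, rfl⟩
      omega
  have hnegsum : ∑ j ∈ Finset.Icc (-(M:ℤ)) (-1), r j * (j:ℝ)^(2*l)
      = ∑ j ∈ Finset.Icc (1:ℤ) (M:ℤ), r j * (j:ℝ)^(2*l) := by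
    rw [hneg, Finset.sum_image (by intro a _ b _ h; exact neg_injective h)]
    refine Finset.sum_congr rfl fun j _ => ?_
    rw [hrneg j]
    congr 1
    push_cast
    exact (even_two_mul l).neg_pow _
  rw [hset, Finset.sum_union hdisj, Finset.sum_insert (by simp), hnegsum, hz]
  simp [zero_pow (show 2*l ≠ 0 by omega)]
end
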